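/- arXiv:2504.07921 — 5 statements merged into one kernel-verified Lean document; each statement's English description precedes it below -/
import Mathlib

section
/- Let G^C be an admissible cluster-DAG, let G^m be a micro graph compatible with G^C, and let V be a cluster of size at least 2. Then there exist distinct variables V_i and V_j of cluster V such that the micro graph obtained from G^m by adding the directed edge V_i → V_j is compatible with the cluster-DAG obtained from G^C by adding a directed self-loop on V. -/
/-! Mixed graphs, d-separation, structures of interest, and cluster-DAGs. -/

/-- A mixed graph: directed edges and (symmetric) bidirected edges. -/
structure MixedGraph (V : Type*) where
  dir : V → V → Prop
  bidir : V → V → Prop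
  bidir_symm : ∀ a b, bidir a b → bidir b a

namespace MixedGraph

variable {V : Type*}

/-- Adjacency: joined by a directed edge (in either orientation) or a bidirected edge. -/
def adj (G : MixedGraph V) (a b : V) : Prop := G.dir a b ∨ G.dir b a ∨ G.bidir a b

/-- The edge between `a` and `b` has an arrowhead at `b`. -/
def intoHead (G : MixedGraph V) (a b : V) : Prop := G.dir a b ∨ G.bidir a b

/-- `b` is a descendant of `a` (reachable from `a` by a directed path, including `a`). -/
def Descendant (G : MixedGraph V) (a b : V) : Prop := Relation.ReflTransGen G.dir a b

/-- The directed part of `G` is acyclic. -/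
def Acyclic (G : MixedGraph V) : Prop := ∀ v, ¬ Relation.TransGen G.dir v v

/-- `b` is a collider on the (sub)path `a - b - c`. -/
def Collider (G : MixedGraph V) (a b c : V) : Prop := G.intoHead a b ∧ G.intoHead c b

/-- The middle vertex `b` of the triple `a - b - c` is active relative to `Z`. -/
def ActiveTriple (G : MixedGraph V) (Z : Set V) (a b c : V) : Prop :=
  (G.Collider a b c → b ∈ Z ∨ ∃ d ∈ Z, G.Descendant b d) ∧
  (¬ G.Collider a b c → b ∉ Z)

/-- A walk in a mixed graph: a nonempty list of vertices, consecutive ones adjacent. -/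
def IsWalk (G : MixedGraph V) (p : List V) : Prop := p ≠ [] ∧ p.Chain' G.adj

/-- A `Z`-active walk. -/
def ActiveWalk (G : MixedGraph V) (Z : Set V) (p : List V) : Prop :=
  G.IsWalk p ∧ ∀ (i : ℕ) (h : i + 2 < p.length),
    G.ActiveTriple Z (p[i]'(by omega)) (p[i+1]'(by omega)) (p[i+2]'h)

/-- A `Z`-active path (a `Z`-active walk with pairwise distinct vertices). -/
def ActivePath (G : MixedGraph V) (Z : Set V) (p : List V) : Prop :=
  G.ActiveWalk Z p ∧ p.Nodup

/-- `X` and `Y` are d-connected given `Z` in `G`. -/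
def DConnected (G : MixedGraph V) (X Y Z : Set V) : Prop :=
  ∃ p : List V, G.ActivePath Z p ∧
    (∃ x ∈ X, p.head? = some x) ∧ (∃ y ∈ Y, p.getLast? = some y)

/-- `σ` is a subgraph of `G`. -/
def Subgraph (σ G : MixedGraph V) : Prop :=
  (∀ a b, σ.dir a b → G.dir a b) ∧ (∀ a b, σ.bidir a b → G.bidir a b)

/-- Union of two mixed graphs. -/
def union (G₁ G₂ : MixedGraph V) : MixedGraph V where
  dir a b := G₁.dir a b ∨ G₂.dir a b
  bidir a b := G₁.bidir a b ∨ G₂.bidir a b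
  bidir_symm a b h := h.imp (G₁.bidir_symm a b) (G₂.bidir_symm a b)

/-- Add the directed edge `a → b`. -/
def addDir (G : MixedGraph V) (a b : V) : MixedGraph V where
  dir x y := G.dir x y ∨ (x = a ∧ y = b)
  bidir := G.bidir
  bidir_symm := G.bidir_symm

/-- Remove the directed edge `a → b`. -/
def removeDir (G : MixedGraph V) (a b : V) : MixedGraph V where
  dir x y := G.dir x y ∧ ¬ (x = a ∧ y = b)
  bidir := G.bidir
  bidir_symm := G.bidir_symm

/-- Add the bidirected edge `a ↔ b`. -/
def addBidir (G : MixedGraph V) (a b : V) : MixedGraph V where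
  dir := G.dir
  bidir x y := G.bidir x y ∨ (x = a ∧ y = b) ∨ (x = b ∧ y = a)
  bidir_symm x y h := by
    rcases h with h | ⟨hx, hy⟩ | ⟨hx, hy⟩
    · exact Or.inl (G.bidir_symm x y h)
    · exact Or.inr (Or.inr ⟨hy, hx⟩)
    · exact Or.inr (Or.inl ⟨hy, hx⟩)

/-- Remove the bidirected edge `a ↔ b`. -/
def removeBidir (G : MixedGraph V) (a b : V) : MixedGraph V where
  dir := G.dir
  bidir x y := G.bidir x y ∧ ¬ ((x = a ∧ y = b) ∨ (x = b ∧ y = a))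
  bidir_symm x y h := ⟨G.bidir_symm x y h.1, fun hc => h.2 (by tauto)⟩

/-- Remove all bidirected edges. -/
def removeAllBidir (G : MixedGraph V) : MixedGraph V :=
  ⟨G.dir, fun _ _ => False, fun _ _ h => h.elim⟩

/-- The mutilated graph `G_{\bar A, \underline B}`: remove every edge with an arrowhead
into a vertex of `A` and every directed edge out of a vertex of `B`. -/
def mutilate (G : MixedGraph V) (A B : Set V) : MixedGraph V where
  dir a b := G.dir a b ∧ b ∉ A ∧ a ∉ B
  bidir a b := G.bidir a b ∧ a ∉ A ∧ b ∉ A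
  bidir_symm a b h := ⟨G.bidir_symm a b h.1, h.2.2, h.2.1⟩

end MixedGraph

variable {V : Type*}

/-- The roots of `σ` with vertex set `S`: vertices with no outgoing directed edge. -/
def Roots (S : Set V) (σ : MixedGraph V) : Set V := {v | v ∈ S ∧ ∀ w, ¬ σ.dir v w}

/-- Node condition for structures of interest: at most one outgoing directed edge,
or two outgoing directed edges but no edge with an arrowhead into it. -/
def OutCondition (σ : MixedGraph V) (v : V) : Prop :=
  (∀ w₁ w₂, σ.dir v w₁ → σ.dir v w₂ → w₁ = w₂) ∨
  ((∃ w₁ w₂, w₁ ≠ w₂ ∧ σ.dir v w₁ ∧ σ.dir v w₂ ∧ ∀ w, σ.dir v w → w = w₁ ∨ w = w₂) ∧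
    (∀ u, ¬ σ.dir u v) ∧ (∀ u, ¬ σ.bidir u v))

/-- `σ`, with vertex set `S`, is a structure of interest: an ADMG with a single
connected component whose nodes satisfy the out-degree condition. -/
def IsSOI (S : Set V) (σ : MixedGraph V) : Prop :=
  (∀ a b, σ.dir a b → a ∈ S ∧ b ∈ S) ∧
  (∀ a b, σ.bidir a b → a ∈ S ∧ b ∈ S) ∧
  S.Nonempty ∧
  (∀ a ∈ S, ∀ b ∈ S, Relation.ReflTransGen σ.adj a b) ∧
  σ.Acyclic ∧
  (∀ v ∈ S, OutCondition σ v)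

/-- The structure of interest `σ` (with vertex set `S`) connects `X` and `Y` under `Z`
inside the mixed graph `G`. -/
def SOIConnects (S : Set V) (σ G : MixedGraph V) (X Y Z : Set V) : Prop :=
  MixedGraph.Subgraph σ G ∧
  (S ∩ X).Nonempty ∧ (S ∩ Y).Nonempty ∧
  Roots S σ ⊆ X ∪ Y ∪ Z ∧
  (∀ v ∈ S, v ∉ Roots S σ → v ∉ Z)

/-- `b` is a fork on the (sub)path `a - b - c`. -/
def ForkAt (G : MixedGraph V) (a b c : V) : Prop := G.dir b a ∧ G.dir b c

/-- `b` is a chain on the (sub)path `a - b - c`. -/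
def ChainAt (G : MixedGraph V) (a b c : V) : Prop :=
  (G.dir a b ∧ G.dir b c) ∨ (G.dir c b ∧ G.dir b a)

/-- The path `p` contains at most one interior triple satisfying `P` whose middle
vertex lies in `T`. -/
def AtMostOneTriple (P : V → V → V → Prop) (T : Set V) (p : List V) : Prop :=
  ∀ (i j : ℕ) (hi : i + 2 < p.length) (hj : j + 2 < p.length),
    P (p[i]'(by omega)) (p[i+1]'(by omega)) (p[i+2]'hi) →
    P (p[j]'(by omega)) (p[j+1]'(by omega)) (p[j+2]'hj) →
    (p[i+1]'(by omega)) ∈ T → (p[j+1]'(by omega)) ∈ T → i = j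

/-- `σ` is exactly the subgraph consisting of the vertices of the path `p` and
one edge joining each pair of consecutive vertices of `p`. -/
def IsPathGraph (σ : MixedGraph V) (p : List V) : Prop :=
  p ≠ [] ∧ p.Nodup ∧
  (∀ (i : ℕ) (h : i + 1 < p.length),
    (σ.dir (p[i]'(by omega)) (p[i+1]'h) ∧ ¬ σ.dir (p[i+1]'h) (p[i]'(by omega)) ∧
      ¬ σ.bidir (p[i]'(by omega)) (p[i+1]'h)) ∨
    (σ.dir (p[i+1]'h) (p[i]'(by omega)) ∧ ¬ σ.dir (p[i]'(by omega)) (p[i+1]'h) ∧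
      ¬ σ.bidir (p[i]'(by omega)) (p[i+1]'h)) ∨
    (σ.bidir (p[i]'(by omega)) (p[i+1]'h) ∧ ¬ σ.dir (p[i]'(by omega)) (p[i+1]'h) ∧
      ¬ σ.dir (p[i+1]'h) (p[i]'(by omega)))) ∧
  (∀ a b, σ.dir a b → ∃ (i : ℕ) (h : i + 1 < p.length),
    ((p[i]'(by omega)) = a ∧ (p[i+1]'h) = b) ∨ ((p[i]'(by omega)) = b ∧ (p[i+1]'h) = a)) ∧
  (∀ a b, σ.bidir a b → ∃ (i : ℕ) (h : i + 1 < p.length),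
    ((p[i]'(by omega)) = a ∧ (p[i+1]'h) = b) ∨ ((p[i]'(by omega)) = b ∧ (p[i+1]'h) = a))

/-- A cluster-DAG: a mixed graph on clusters (self-loops and cycles allowed),
each cluster carrying a positive size. -/
structure ClusterDAG (C : Type*) where
  graph : MixedGraph C
  size : C → ℕ
  size_pos : ∀ c, 0 < size c

namespace ClusterDAG

variable {C : Type*}

/-- The micro vertex set: for each cluster `c`, variables `c_1, …, c_{#c}`. -/
abbrev MicroV (GC : ClusterDAG C) : Type _ := Σ c : C, Fin (GC.size c)

/-- The micro graph `Gm` is compatible with the cluster-DAG `GC`. -/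
def Compatible (GC : ClusterDAG C) (Gm : MixedGraph GC.MicroV) : Prop :=
  Gm.Acyclic ∧
  (∀ A B : C, A ≠ B →
    (GC.graph.dir A B ↔ ∃ (i : Fin (GC.size A)) (j : Fin (GC.size B)), Gm.dir ⟨A, i⟩ ⟨B, j⟩)) ∧
  (∀ A B : C, A ≠ B →
    (GC.graph.bidir A B ↔ ∃ (i : Fin (GC.size A)) (j : Fin (GC.size B)), Gm.bidir ⟨A, i⟩ ⟨B, j⟩)) ∧
  (∀ A : C, (GC.graph.dir A A ↔ ∃ i j : Fin (GC.size A), i ≠ j ∧ Gm.dir ⟨A, i⟩ ⟨A, j⟩)) ∧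
  (∀ A : C, (GC.graph.bidir A A ↔ ∃ i j : Fin (GC.size A), i ≠ j ∧ Gm.bidir ⟨A, i⟩ ⟨A, j⟩))

/-- `GC` is admissible: some compatible micro graph exists. -/
def Admissible (GC : ClusterDAG C) : Prop := ∃ Gm, GC.Compatible Gm

/-- The set of micro variables belonging to clusters of `S`. -/
def microSet (GC : ClusterDAG C) (S : Set C) : Set GC.MicroV := {v | v.1 ∈ S}

/-- The indexing inside each cluster is consistent with a topological order of `Gm`:
`V_i` is never a strict descendant of `V_j` when `i < j`. -/
def TopoConsistent (GC : ClusterDAG C) (Gm : MixedGraph GC.MicroV) : Prop :=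
  ∀ (A : C) (i j : Fin (GC.size A)), i < j →
    ¬ Relation.TransGen Gm.dir ⟨A, j⟩ ⟨A, i⟩

/-- Remove all bidirected edges of the cluster-DAG. -/
def removeAllBidir (GC : ClusterDAG C) : ClusterDAG C :=
  ⟨GC.graph.removeAllBidir, GC.size, GC.size_pos⟩

/-- Add the bidirected edge `A ↔ B` to the cluster-DAG. -/
def addBidir (GC : ClusterDAG C) (A B : C) : ClusterDAG C :=
  ⟨GC.graph.addBidir A B, GC.size, GC.size_pos⟩

/-- Remove all directed self-loops of the cluster-DAG. -/
def removeDirSelfLoops (GC : ClusterDAG C) : ClusterDAG C :=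
  ⟨⟨fun A B => GC.graph.dir A B ∧ A ≠ B, GC.graph.bidir, GC.graph.bidir_symm⟩,
    GC.size, GC.size_pos⟩

/-- Add a directed self-loop on the cluster `Vc`. -/
def addDirSelfLoop (GC : ClusterDAG C) (Vc : C) : ClusterDAG C :=
  ⟨⟨fun A B => GC.graph.dir A B ∨ (A = Vc ∧ B = Vc), GC.graph.bidir, GC.graph.bidir_symm⟩,
    GC.size, GC.size_pos⟩

/-- Remove all intra-cluster directed edges of a micro graph. -/
def removeIntraDir (GC : ClusterDAG C) (Gm : MixedGraph GC.MicroV) : MixedGraph GC.MicroV where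
  dir a b := Gm.dir a b ∧ a.1 ≠ b.1
  bidir := Gm.bidir
  bidir_symm := Gm.bidir_symm

/-- Reduce every cluster of size greater than 4 to size 4. -/
def truncate4 (GC : ClusterDAG C) : ClusterDAG C where
  graph := GC.graph
  size c := min (GC.size c) 4
  size_pos c := lt_min (GC.size_pos c) (by norm_num)

/-- The minimal compatible graph `G^m_min` of a cluster-DAG. -/
def minGraph (GC : ClusterDAG C) : MixedGraph GC.MicroV where
  dir a b :=
    (a.1 = b.1 ∧ GC.graph.dir a.1 b.1 ∧ (a.2 : ℕ) < (b.2 : ℕ)) ∨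
    (a.1 ≠ b.1 ∧ GC.graph.dir a.1 b.1 ∧ (a.2 : ℕ) = 0 ∧ (b.2 : ℕ) = GC.size b.1 - 1)
  bidir a b := GC.graph.bidir a.1 b.1 ∧ a ≠ b
  bidir_symm a b h := ⟨GC.graph.bidir_symm _ _ h.1, Ne.symm h.2⟩

/-- The unfolded graph `G^{m,C}_u` of a cluster-DAG. -/
def unfolded (GC : ClusterDAG C) : MixedGraph GC.MicroV where
  dir a b := (minGraph GC).dir a b ∨
    (a.1 ≠ b.1 ∧ GC.graph.dir a.1 b.1 ∧ MixedGraph.Acyclic ((minGraph GC).addDir a b))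
  bidir := (minGraph GC).bidir
  bidir_symm := (minGraph GC).bidir_symm

/-- Relabel a micro graph by a permutation of the indices within each cluster. -/
def relabel (GC : ClusterDAG C) (Gm : MixedGraph GC.MicroV)
    (e : ∀ c, Fin (GC.size c) ≃ Fin (GC.size c)) : MixedGraph GC.MicroV where
  dir a b := Gm.dir ⟨a.1, (e a.1).symm a.2⟩ ⟨b.1, (e b.1).symm b.2⟩
  bidir a b := Gm.bidir ⟨a.1, (e a.1).symm a.2⟩ ⟨b.1, (e b.1).symm b.2⟩
  bidir_symm a b h := Gm.bidir_symm _ _ h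

end ClusterDAG


private lemma transGen_addDir {V : Type*} (G : MixedGraph V) (a b v w : V)
    (h : Relation.TransGen (G.addDir a b).dir v w) :
    Relation.TransGen G.dir v w ∨
      (Relation.ReflTransGen G.dir v a ∧ Relation.ReflTransGen G.dir b w) := by
  induction h with
  | single h =>
    rcases h with h | ⟨rfl, rfl⟩
    · exact Or.inl (.single h)
    · exact Or.inr ⟨.refl, .refl⟩
  | tail _ hstep ih =>
    rcases hstep with hstep | ⟨rfl, rfl⟩
    · rcases ih with ih | ⟨h1, h2⟩
      · exact Or.inl (ih.tail hstep)
      · exact Or.inr ⟨h1, h2.tail hstep⟩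
    · rcases ih with ih | ⟨h1, h2⟩
      · exact Or.inr ⟨ih.to_reflTransGen, .refl⟩
      · exact Or.inr ⟨h1, .refl⟩

private lemma acyclic_addDir {V : Type*} (G : MixedGraph V) (a b : V)
    (hG : G.Acyclic) (hb : ¬ Relation.ReflTransGen G.dir b a) :
    (G.addDir a b).Acyclic := by
  intro v hv
  rcases transGen_addDir G a b v v hv with h | ⟨h1, h2⟩
  · exact hG v h
  · exact hb (h2.trans h1)

/-- For a cluster `V` of size at least 2, some intra-cluster directed
edge `V_i → V_j` can be added to a compatible micro graph so as to obtain a micro graph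
compatible with the cluster-DAG with a directed self-loop added on `V`. -/
theorem addSelfLoop_compatible {C : Type*} [Fintype C] (GC : ClusterDAG C)
    (hadm : GC.Admissible) (Gm : MixedGraph GC.MicroV) (hGm : GC.Compatible Gm)
    (Vc : C) (hV : 2 ≤ GC.size Vc) :
    ∃ i j : Fin (GC.size Vc), i ≠ j ∧
      (GC.addDirSelfLoop Vc).Compatible (Gm.addDir ⟨Vc, i⟩ ⟨Vc, j⟩) := by
  obtain ⟨hac, hdir, hbidir, hdirself, hbidirself⟩ := hGm
  set a0 : GC.MicroV := ⟨Vc, ⟨0, by omega⟩⟩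
  set a1 : GC.MicroV := ⟨Vc, ⟨1, by omega⟩⟩
  have hne : (⟨0, by omega⟩ : Fin (GC.size Vc)) ≠ ⟨1, by omega⟩ := by
    intro h; exact absurd (congrArg Fin.val h) (by norm_num)
  have key : ∃ i j : Fin (GC.size Vc), i ≠ j ∧
      ¬ Relation.ReflTransGen Gm.dir ⟨Vc, j⟩ ⟨Vc, i⟩ := by
    by_cases h : Relation.ReflTransGen Gm.dir a1 a0
    · refine ⟨⟨1, by omega⟩, ⟨0, by omega⟩, hne.symm, fun h' => ?_⟩
      have hT : Relation.TransGen Gm.dir a1 a0 := by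
        rcases (Relation.reflTransGen_iff_eq_or_transGen.mp h) with h | h
        · exact absurd (congrArg (fun x : GC.MicroV => (x.2 : ℕ)) h.symm) (by norm_num)
        · exact h
      exact hac a0 (Relation.TransGen.trans_right h' hT)
    · exact ⟨⟨0, by omega⟩, ⟨1, by omega⟩, hne, h⟩
  obtain ⟨i, j, hij, hnopath⟩ := key
  refine ⟨i, j, hij, ?_, ?_, ?_, ?_, ?_⟩
  · exact acyclic_addDir Gm _ _ hac hnopath
  · intro A B hAB
    constructor
    · intro h
      rcases h with h | ⟨rfl, rfl⟩
      · obtain ⟨i', j', h'⟩ := (hdir A B hAB).mp h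
        exact ⟨i', j', Or.inl h'⟩
      · exact absurd rfl hAB
    · rintro ⟨i', j', h | ⟨h1, h2⟩⟩
      · exact Or.inl ((hdir A B hAB).mpr ⟨i', j', h⟩)
      · exact absurd ((congrArg Sigma.fst h1).trans (congrArg Sigma.fst h2).symm) hAB
  · intro A B hAB
    exact hbidir A B hAB
  · intro A
    constructor
    · intro h
      rcases h with h | ⟨rfl, _⟩
      · obtain ⟨i', j', hne', h'⟩ := (hdirself A).mp h
        exact ⟨i', j', hne', Or.inl h'⟩
      · exact ⟨i, j, hij, Or.inr ⟨rfl, rfl⟩⟩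
    · rintro ⟨i', j', hne', h | ⟨h1, _⟩⟩
      · exact Or.inl ((hdirself A).mpr ⟨i', j', hne', h⟩)
      · exact Or.inr ⟨congrArg Sigma.fst h1, congrArg Sigma.fst h1⟩
  · intro A
    exact hbidirself A
end

section
/- Let G^C be an admissible cluster-DAG, let G^m be a micro graph compatible with G^C with variables in each cluster indexed consistently with a topological order of G^m, and let V be a cluster of G^C. If there exist indices i > j such that G^m contains a directed edge V_i → W_w (where W_w is a variable outside or inside another position), then the graph obtained from G^m by replacing the edge V_i → W_w with the edge V_j → W_w is an acyclic micro graph compatible with G^C. -/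
variable {V : Type*}

private lemma transGen_add_aux {V : Type*} {D : V → V → Prop} {a b x y : V}
    (h : Relation.TransGen (fun x y => D x y ∨ (x = a ∧ y = b)) x y) :
    Relation.TransGen D x y ∨
      (Relation.ReflTransGen D x a ∧ Relation.ReflTransGen D b y) := by
  induction h with
  | single h' =>
    rcases h' with h' | ⟨rfl, rfl⟩
    · exact Or.inl (Relation.TransGen.single h')
    · exact Or.inr ⟨Relation.ReflTransGen.refl, Relation.ReflTransGen.refl⟩
  | tail h' hstep ih =>
    rcases hstep with hstep | ⟨rfl, rfl⟩
    · rcases ih with ih | ⟨ih1, ih2⟩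
      · exact Or.inl (ih.tail hstep)
      · exact Or.inr ⟨ih1, ih2.tail hstep⟩
    · rcases ih with ih | ⟨ih1, _⟩
      · exact Or.inr ⟨ih.to_reflTransGen, Relation.ReflTransGen.refl⟩
      · exact Or.inr ⟨ih1, Relation.ReflTransGen.refl⟩

private lemma acyclic_add {V : Type*} {D : V → V → Prop}
    (hD : ∀ v, ¬ Relation.TransGen D v v) {a b : V}
    (hab : ¬ Relation.ReflTransGen D b a) (v : V) :
    ¬ Relation.TransGen (fun x y => D x y ∨ (x = a ∧ y = b)) v v := by
  intro h
  rcases transGen_add_aux h with h | ⟨h1, h2⟩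
  · exact hD v h
  · exact hab (h2.trans h1)

/-- (Moving an outgoing arrow up.) If `i > j` and `Gm` contains the
directed edge `V_i → W_w`, then replacing it by `V_j → W_w` yields an acyclic micro
graph compatible with `G^C`. -/
theorem moveArrowUp_compatible {C : Type*} [Fintype C] (GC : ClusterDAG C)
    (hadm : GC.Admissible) (Gm : MixedGraph GC.MicroV) (hGm : GC.Compatible Gm)
    (htopo : GC.TopoConsistent Gm)
    (Vc : C) (i j : Fin (GC.size Vc)) (hji : j < i)
    (w : GC.MicroV) (hedge : Gm.dir ⟨Vc, i⟩ w) :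
    GC.Compatible ((Gm.removeDir ⟨Vc, i⟩ w).addDir ⟨Vc, j⟩ w) := by
  obtain ⟨hac, hdir, hbid, hsd, hsb⟩ := hGm
  -- w is not reachable from itself to ⟨Vc, j⟩ in Gm
  have hnr : ¬ Relation.ReflTransGen Gm.dir w ⟨Vc, j⟩ := by
    intro h
    exact htopo Vc j i hji (Relation.TransGen.head' hedge h)
  have hwne : w ≠ (⟨Vc, j⟩ : GC.MicroV) := by
    intro h
    exact hnr (h ▸ Relation.ReflTransGen.refl)
  refine ⟨?_, ?_, hbid, ?_, hsb⟩
  · -- acyclicity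
    intro v hv
    refine acyclic_add hac hnr v (Relation.TransGen.mono ?_ v v hv)
    rintro x y (⟨h, -⟩ | ⟨rfl, rfl⟩)
    · exact Or.inl h
    · exact Or.inr ⟨rfl, rfl⟩
  · -- inter-cluster directed edges
    intro A B hAB
    constructor
    · intro h
      obtain ⟨i', j', hd⟩ := (hdir A B hAB).1 h
      by_cases hc : (⟨A, i'⟩ : GC.MicroV) = ⟨Vc, i⟩ ∧ (⟨B, j'⟩ : GC.MicroV) = w
      · obtain ⟨rfl, hi⟩ := Sigma.mk.inj_iff.mp hc.1
        refine ⟨j, j', Or.inr ⟨rfl, hc.2⟩⟩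
      · exact ⟨i', j', Or.inl ⟨hd, hc⟩⟩
    · rintro ⟨i', j', (⟨hd, -⟩ | ⟨h1, h2⟩)⟩
      · exact (hdir A B hAB).2 ⟨i', j', hd⟩
      · obtain ⟨rfl, -⟩ := Sigma.mk.inj_iff.mp h1
        cases h2
        exact (hdir A B hAB).2 ⟨i, j', hedge⟩
  · -- directed self-loops
    intro A
    constructor
    · intro h
      obtain ⟨i', j', hne, hd⟩ := (hsd A).1 h
      by_cases hc : (⟨A, i'⟩ : GC.MicroV) = ⟨Vc, i⟩ ∧ (⟨A, j'⟩ : GC.MicroV) = w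
      · obtain ⟨rfl, hi⟩ := Sigma.mk.inj_iff.mp hc.1
        refine ⟨j, j', ?_, Or.inr ⟨rfl, hc.2⟩⟩
        intro hjj
        exact hwne (hc.2.symm.trans (by rw [hjj]))
      · exact ⟨i', j', hne, Or.inl ⟨hd, hc⟩⟩
    · rintro ⟨i', j', hne, (⟨hd, -⟩ | ⟨h1, h2⟩)⟩
      · exact (hsd A).2 ⟨i', j', hne, hd⟩
      · obtain ⟨rfl, -⟩ := Sigma.mk.inj_iff.mp h1
        cases h2
        refine (hsd A).2 ⟨i, j', ?_, hedge⟩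
        intro hij
        exact hac _ (Relation.TransGen.single (hij ▸ hedge))
end

section
/- Let G^C be an admissible cluster-DAG, let G^m be a micro graph compatible with G^C with variables in each cluster indexed consistently with a topological order of G^m, and let V be a cluster of G^C. If G^m contains a fork at V_i with i > j (that is, two directed edges V_i → A and V_i → B with A ≠ B), then the graph obtained from G^m by replacing these two edges with V_j → A and V_j → B is an acyclic micro graph compatible with G^C containing the fork V_j → A and V_j → B. -/
variable {V : Type*}

/-- (Moving a fork up.) If `Gm` contains a fork `A ← V_i → B` with
`i > j`, then replacing the two edges by `V_j → A` and `V_j → B` yields an acyclic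
micro graph compatible with `G^C` containing the fork at `V_j`. -/
theorem moveForkUp_compatible {C : Type*} [Fintype C] (GC : ClusterDAG C)
    (hadm : GC.Admissible) (Gm : MixedGraph GC.MicroV) (hGm : GC.Compatible Gm)
    (htopo : GC.TopoConsistent Gm)
    (Vc : C) (i j : Fin (GC.size Vc)) (hji : j < i)
    (a b : GC.MicroV) (hab : a ≠ b)
    (ha : Gm.dir ⟨Vc, i⟩ a) (hb : Gm.dir ⟨Vc, i⟩ b) :
    GC.Compatible ((((Gm.removeDir ⟨Vc, i⟩ a).removeDir ⟨Vc, i⟩ b).addDir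
        ⟨Vc, j⟩ a).addDir ⟨Vc, j⟩ b) ∧
    ((((Gm.removeDir ⟨Vc, i⟩ a).removeDir ⟨Vc, i⟩ b).addDir
        ⟨Vc, j⟩ a).addDir ⟨Vc, j⟩ b).dir ⟨Vc, j⟩ a ∧
    ((((Gm.removeDir ⟨Vc, i⟩ a).removeDir ⟨Vc, i⟩ b).addDir
        ⟨Vc, j⟩ a).addDir ⟨Vc, j⟩ b).dir ⟨Vc, j⟩ b := by
  classical
  obtain ⟨hac, hdir2, hbid2, hself, hbself⟩ := hGm
  set G' := (((Gm.removeDir ⟨Vc, i⟩ a).removeDir ⟨Vc, i⟩ b).addDir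
      ⟨Vc, j⟩ a).addDir ⟨Vc, j⟩ b with hG'
  -- description of the directed edges of G'
  have hdirG' : ∀ x y : GC.MicroV, G'.dir x y ↔
      (Gm.dir x y ∧ ¬(x = ⟨Vc, i⟩ ∧ y = a) ∧ ¬(x = ⟨Vc, i⟩ ∧ y = b)) ∨
      (x = ⟨Vc, j⟩ ∧ y = a) ∨ (x = ⟨Vc, j⟩ ∧ y = b) := by
    intro x y
    show (((Gm.dir x y ∧ ¬(x = ⟨Vc, i⟩ ∧ y = a)) ∧ ¬(x = ⟨Vc, i⟩ ∧ y = b)) ∨ _) ∨ _ ↔ _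
    tauto
  have hnij : ¬ Relation.TransGen Gm.dir ⟨Vc, i⟩ ⟨Vc, j⟩ := htopo Vc j i hji
  have hcontra : ∀ t : GC.MicroV, Gm.dir ⟨Vc, i⟩ t →
      Relation.ReflTransGen Gm.dir t ⟨Vc, j⟩ → False := fun t h1 h2 =>
    hnij (Relation.TransGen.head' h1 h2)
  have haj : a ≠ (⟨Vc, j⟩ : GC.MicroV) := by
    rintro rfl; exact hcontra _ ha Relation.ReflTransGen.refl
  have hbj : b ≠ (⟨Vc, j⟩ : GC.MicroV) := by
    rintro rfl; exact hcontra _ hb Relation.ReflTransGen.refl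
  have hai : a ≠ (⟨Vc, i⟩ : GC.MicroV) := by
    rintro rfl; exact hac _ (Relation.TransGen.single ha)
  have hbi : b ≠ (⟨Vc, i⟩ : GC.MicroV) := by
    rintro rfl; exact hac _ (Relation.TransGen.single hb)
  -- acyclicity
  have hacyc : G'.Acyclic := by
    intro v hv
    -- enlarge to the relation R
    set R : GC.MicroV → GC.MicroV → Prop := fun x y =>
      Gm.dir x y ∨ (x = ⟨Vc, j⟩ ∧ y = a) ∨ (x = ⟨Vc, j⟩ ∧ y = b) with hR
    have hsub : ∀ x y, G'.dir x y → R x y := by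
      intro x y h
      rcases (hdirG' x y).mp h with ⟨h1, _, _⟩ | h | h
      · exact Or.inl h1
      · exact Or.inr (Or.inl h)
      · exact Or.inr (Or.inr h)
    have hv' : Relation.TransGen R v v := Relation.TransGen.mono hsub _ _ hv
    have key : ∀ x y : GC.MicroV, Relation.TransGen R x y →
        Relation.TransGen Gm.dir x y ∨
        (Relation.ReflTransGen Gm.dir x ⟨Vc, j⟩ ∧
          (Relation.ReflTransGen Gm.dir a y ∨ Relation.ReflTransGen Gm.dir b y)) := by
      intro x y h
      induction h with
      | single h =>
        rcases h with h | ⟨rfl, rfl⟩ | ⟨rfl, rfl⟩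
        · exact Or.inl (Relation.TransGen.single h)
        · exact Or.inr ⟨Relation.ReflTransGen.refl, Or.inl Relation.ReflTransGen.refl⟩
        · exact Or.inr ⟨Relation.ReflTransGen.refl, Or.inr Relation.ReflTransGen.refl⟩
      | tail hxy hyz ih =>
        rcases ih with h1 | ⟨h1, h2⟩
        · rcases hyz with h | ⟨rfl, rfl⟩ | ⟨rfl, rfl⟩
          · exact Or.inl (h1.tail h)
          · exact Or.inr ⟨h1.to_reflTransGen, Or.inl Relation.ReflTransGen.refl⟩
          · exact Or.inr ⟨h1.to_reflTransGen, Or.inr Relation.ReflTransGen.refl⟩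
        · rcases hyz with h | ⟨hy, hz⟩ | ⟨hy, hz⟩
          · exact Or.inr ⟨h1, h2.imp (fun h' => h'.tail h) (fun h' => h'.tail h)⟩
          · exact h2.elim (fun h' => (hcontra _ ha (hy ▸ h')).elim)
              (fun h' => (hcontra _ hb (hy ▸ h')).elim)
          · exact h2.elim (fun h' => (hcontra _ ha (hy ▸ h')).elim)
              (fun h' => (hcontra _ hb (hy ▸ h')).elim)
    rcases key v v hv' with h | ⟨h1, h2 | h2⟩
    · exact hac v h
    · exact hcontra a ha (h2.trans h1)
    · exact hcontra b hb (h2.trans h1)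
  refine ⟨⟨hacyc, ?_, ?_, ?_, ?_⟩, ?_, ?_⟩
  · -- inter-cluster directed edges
    intro A B hAB
    constructor
    · intro h
      obtain ⟨k, l, he⟩ := (hdir2 A B hAB).mp h
      by_cases h1 : (⟨A, k⟩ : GC.MicroV) = ⟨Vc, i⟩ ∧ (⟨B, l⟩ : GC.MicroV) = a
      · obtain ⟨hA, hB⟩ := h1
        obtain ⟨rfl, hk⟩ := Sigma.mk.inj_iff.mp hA
        refine ⟨j, l, ?_⟩
        rw [hdirG']
        exact Or.inr (Or.inl ⟨rfl, hB⟩)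
      · by_cases h2 : (⟨A, k⟩ : GC.MicroV) = ⟨Vc, i⟩ ∧ (⟨B, l⟩ : GC.MicroV) = b
        · obtain ⟨hA, hB⟩ := h2
          obtain ⟨rfl, hk⟩ := Sigma.mk.inj_iff.mp hA
          refine ⟨j, l, ?_⟩
          rw [hdirG']
          exact Or.inr (Or.inr ⟨rfl, hB⟩)
        · exact ⟨k, l, (hdirG' _ _).mpr (Or.inl ⟨he, h1, h2⟩)⟩
    · rintro ⟨k, l, he⟩
      rcases (hdirG' _ _).mp he with ⟨h1, _, _⟩ | ⟨hA, hB⟩ | ⟨hA, hB⟩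
      · exact (hdir2 A B hAB).mpr ⟨k, l, h1⟩
      · obtain ⟨rfl, _⟩ := Sigma.mk.inj_iff.mp hA
        subst hB
        exact (hdir2 _ _ hAB).mpr ⟨i, l, ha⟩
      · obtain ⟨rfl, _⟩ := Sigma.mk.inj_iff.mp hA
        subst hB
        exact (hdir2 _ _ hAB).mpr ⟨i, l, hb⟩
  · -- inter-cluster bidirected edges (unchanged)
    exact hbid2
  · -- directed self-loops
    intro A
    constructor
    · intro h
      obtain ⟨k, l, hne, he⟩ := (hself A).mp h
      by_cases h1 : (⟨A, k⟩ : GC.MicroV) = ⟨Vc, i⟩ ∧ (⟨A, l⟩ : GC.MicroV) = a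
      · obtain ⟨hA, hB⟩ := h1
        obtain ⟨rfl, hk⟩ := Sigma.mk.inj_iff.mp hA
        refine ⟨j, l, ?_, ?_⟩
        · rintro rfl; exact haj hB.symm
        · rw [hdirG']; exact Or.inr (Or.inl ⟨rfl, hB⟩)
      · by_cases h2 : (⟨A, k⟩ : GC.MicroV) = ⟨Vc, i⟩ ∧ (⟨A, l⟩ : GC.MicroV) = b
        · obtain ⟨hA, hB⟩ := h2
          obtain ⟨rfl, hk⟩ := Sigma.mk.inj_iff.mp hA
          refine ⟨j, l, ?_, ?_⟩
          · rintro rfl; exact hbj hB.symm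
          · rw [hdirG']; exact Or.inr (Or.inr ⟨rfl, hB⟩)
        · exact ⟨k, l, hne, (hdirG' _ _).mpr (Or.inl ⟨he, h1, h2⟩)⟩
    · rintro ⟨k, l, hne, he⟩
      rcases (hdirG' _ _).mp he with ⟨h1, _, _⟩ | ⟨hA, hB⟩ | ⟨hA, hB⟩
      · exact (hself A).mpr ⟨k, l, hne, h1⟩
      · obtain ⟨rfl, _⟩ := Sigma.mk.inj_iff.mp hA
        subst hB
        refine (hself _).mpr ⟨i, l, ?_, ha⟩
        rintro rfl; exact hai rfl
      · obtain ⟨rfl, _⟩ := Sigma.mk.inj_iff.mp hA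
        subst hB
        refine (hself _).mpr ⟨i, l, ?_, hb⟩
        rintro rfl; exact hbi rfl
  · -- bidirected self-loops (unchanged)
    exact hbself
  · exact (hdirG' _ _).mpr (Or.inr (Or.inl ⟨rfl, rfl⟩))
  · exact (hdirG' _ _).mpr (Or.inr (Or.inr ⟨rfl, rfl⟩))
end

section
/- Let G be a mixed graph, let Z be a subset of its vertices, and let X and Y be vertices. If there exists a Z-active walk from X to Y in G, then there exists a Z-active path from X to Y in G. -/
variable {V : Type*}

section ActiveWalkPath

open MixedGraph

variable {V : Type*}

private lemma dir_of_adj_not_intoHead {G : MixedGraph V} {a b : V}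
    (h : G.adj a b) (hn : ¬ G.intoHead b a) : G.dir a b := by
  rcases h with h | h | h
  · exact h
  · exact absurd (Or.inl h) hn
  · exact absurd (Or.inr (G.bidir_symm a b h)) hn

private lemma intoHead_of_adj_not_dir {G : MixedGraph V} {a b : V}
    (h : G.adj a b) (hn : ¬ G.dir a b) : G.intoHead b a := by
  rcases h with h | h | h
  · exact absurd h hn
  · exact Or.inl h
  · exact Or.inr (G.bidir_symm a b h)

private lemma getElem_idx_congr (p : List V) {a b : ℕ} (h : a = b) (ha : a < p.length) :
    p[a] = p[b]'(h ▸ ha) := by subst h; rfl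

/-- Key lemma: splicing out a repeated vertex yields an active middle triple. -/
private lemma key_triple (G : MixedGraph V) (Z : Set V) (f : ℕ → V) (n : ℕ)
    (hchain : ∀ t, t + 1 < n → G.adj (f t) (f (t+1)))
    (htriple : ∀ t, t + 2 < n → G.ActiveTriple Z (f t) (f (t+1)) (f (t+2)))
    {i j : ℕ} (hi : 0 < i) (hij : i < j) (hj : j + 1 < n) (heq : f i = f j) :
    G.ActiveTriple Z (f (i-1)) (f i) (f (j+1)) := by
  classical
  have tI : G.ActiveTriple Z (f (i-1)) (f i) (f (i+1)) := by
    have h := htriple (i-1) (by omega)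
    rwa [(by omega : i - 1 + 1 = i), (by omega : i - 1 + 2 = i + 1)] at h
  have tJ : G.ActiveTriple Z (f (j-1)) (f j) (f (j+1)) := by
    have h := htriple (j-1) (by omega)
    rwa [(by omega : j - 1 + 1 = j), (by omega : j - 1 + 2 = j + 1)] at h
  constructor
  · rintro ⟨h1, h2⟩
    by_cases hI : G.intoHead (f (i+1)) (f i)
    · exact tI.1 ⟨h1, hI⟩
    by_cases hJ : G.intoHead (f (j-1)) (f j)
    · have h := tJ.1 ⟨hJ, by rw [← heq]; exact h2⟩
      rwa [heq]
    have hd1 : G.dir (f i) (f (i+1)) := dir_of_adj_not_intoHead (hchain i (by omega)) hI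
    have hd2 : ¬ G.dir (f (j-1)) (f j) := fun h => hJ (Or.inl h)
    have hex : ∃ t, i ≤ t ∧ t < j ∧ ¬ G.dir (f t) (f (t+1)) :=
      ⟨j - 1, by omega, by omega, by rw [(by omega : j - 1 + 1 = j)]; exact hd2⟩
    obtain ⟨hk1, hk2, hk3⟩ := Nat.find_spec hex
    set k := Nat.find hex with hk
    have hmin : ∀ s, i ≤ s → s < k → G.dir (f s) (f (s+1)) := by
      intro s hs hsk
      by_contra hc
      exact Nat.find_min hex hsk ⟨hs, by omega, hc⟩
    have hik : i < k := by
      rcases Nat.lt_or_ge i k with h | h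
      · exact h
      · exfalso
        have hki : k = i := by omega
        rw [hki] at hk3; exact hk3 hd1
    have hdesc : ∀ t, i ≤ t → t ≤ k → Relation.ReflTransGen G.dir (f i) (f t) := by
      intro t ht
      induction t, ht using Nat.le_induction with
      | base => intro _; exact Relation.ReflTransGen.refl
      | succ t ht iht =>
        intro h2
        exact (iht (by omega)).tail (hmin t ht (by omega))
    have hcol : G.Collider (f (k-1)) (f k) (f (k+1)) := by
      constructor
      · have h := hmin (k-1) (by omega) (by omega)
        rw [(by omega : k - 1 + 1 = k)] at h
        exact Or.inl h
      · exact intoHead_of_adj_not_dir (hchain k (by omega)) hk3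
    have tK : G.ActiveTriple Z (f (k-1)) (f k) (f (k+1)) := by
      have h := htriple (k-1) (by omega)
      rwa [(by omega : k - 1 + 1 = k), (by omega : k - 1 + 2 = k + 1)] at h
    have hvk : Relation.ReflTransGen G.dir (f i) (f k) := hdesc k (by omega) le_rfl
    rcases tK.1 hcol with h | ⟨d, hd, hdd⟩
    · exact Or.inr ⟨f k, h, hvk⟩
    · exact Or.inr ⟨d, hd, hvk.trans hdd⟩
  · intro hnc
    rcases not_and_or.mp hnc with h | h
    · exact tI.2 (fun hc => h hc.1)
    · have hz : f j ∉ Z := tJ.2 (fun hc => h (by rw [heq]; exact hc.2))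
      rwa [heq]

private def spliceIdx (i j t : ℕ) : ℕ := if t ≤ i then t else t + (j - i)

private lemma spliceIdx_le {i j t : ℕ} (h : t ≤ i) : spliceIdx i j t = t := if_pos h

private lemma spliceIdx_gt {i j t : ℕ} (h : i < t) : spliceIdx i j t = t + (j - i) :=
  if_neg (by omega)

private lemma spliceIdx_succ {i j t : ℕ} (h : t ≠ i) :
    spliceIdx i j (t + 1) = spliceIdx i j t + 1 := by
  unfold spliceIdx
  split <;> split <;> omega

private lemma walk_shorten (G : MixedGraph V) (Z : Set V) :
    ∀ n (p : List V), p.length = n → G.ActiveWalk Z p →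
    ∃ q : List V, G.ActivePath Z q ∧ q.head? = p.head? ∧ q.getLast? = p.getLast? := by
  intro n
  induction n using Nat.strong_induction_on with
  | _ n ih =>
    intro p hlen hp
    by_cases hnd : p.Nodup
    · exact ⟨p, ⟨hp, hnd⟩, rfl, rfl⟩
    have hne : p ≠ [] := hp.1.1
    have hninj : ¬ Function.Injective p.get := fun h => hnd (List.nodup_iff_injective_get.mpr h)
    rw [Function.not_injective_iff] at hninj
    obtain ⟨a, b, hab, hne'⟩ := hninj
    obtain ⟨i, j, hij, hjlen, hijeq⟩ : ∃ i j : ℕ, i < j ∧ j < p.length ∧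
        ∀ (hi : i < p.length) (hj : j < p.length), p[i] = p[j] := by
      rcases Ne.lt_or_gt hne' with h | h
      · exact ⟨a, b, h, b.isLt, fun _ _ => by simpa using hab⟩
      · exact ⟨b, a, h, a.isLt, fun _ _ => by simpa using hab.symm⟩
    -- index function for p
    set f : ℕ → V := fun t => p.getD t (p.head hne) with hfdef
    have hf : ∀ t (h : t < p.length), f t = p[t] := fun t h => List.getD_eq_getElem p _ h
    have hchain : ∀ t, t + 1 < p.length → G.adj (f t) (f (t+1)) := by
      intro t ht
      have h := List.isChain_iff_getElem.mp hp.1.2 t (by omega)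
      rw [hf t (by omega), hf (t+1) ht]
      simpa using h
    have htriple : ∀ t, t + 2 < p.length → G.ActiveTriple Z (f t) (f (t+1)) (f (t+2)) := by
      intro t ht
      rw [hf t (by omega), hf (t+1) (by omega), hf (t+2) ht]
      exact hp.2 t ht
    have hfij : f i = f j := by
      rw [hf i (by omega), hf j (by omega)]; exact hijeq (by omega) (by omega)
    -- the spliced walk
    set m := p.length - (j - i) with hm
    set g : ℕ → ℕ := spliceIdx i j with hgdef
    have hgb : ∀ t, t < m → g t < p.length := by
      intro t ht
      rcases le_or_gt t i with h | h
      · rw [hgdef, spliceIdx_le h]; omega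
      · rw [hgdef, spliceIdx_gt h]; omega
    have hgi : g i = i := spliceIdx_le le_rfl
    have hgi1 : g (i+1) = j + 1 := by rw [hgdef, spliceIdx_gt (by omega)]; omega
    have hgi2 : g (i+2) = j + 2 := by rw [hgdef, spliceIdx_gt (by omega)]; omega
    set q : List V := List.ofFn (fun t : Fin m => f (g t)) with hqdef
    have hql : q.length = m := List.length_ofFn
    have hq : ∀ t (h : t < q.length), q[t] = f (g t) := fun t h =>
      List.getElem_ofFn h
    have hmi : i + 1 ≤ m := by omega
    have hqne : q ≠ [] := by
      rw [← List.length_pos_iff]; omega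
    have hqchain : q.Chain' G.adj := by
      apply List.isChain_iff_getElem.mpr
      intro t ht
      rw [hql] at ht
      rw [hq t (by omega), hq (t+1) (by omega)]
      by_cases hti : t = i
      · subst hti
        rw [hgi, hgi1, hfij]
        exact hchain j (by omega)
      · have hst : g (t+1) = g t + 1 := by rw [hgdef]; exact spliceIdx_succ hti
        rw [hst]
        have hb := hgb (t+1) (by omega)
        rw [hst] at hb
        exact hchain (g t) hb
    have hqwalk : G.ActiveWalk Z q := by
      refine ⟨⟨hqne, hqchain⟩, ?_⟩
      intro t ht
      rw [hq t (by omega), hq (t+1) (by omega), hq (t+2) (by omega)]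
      rw [hql] at ht
      rcases lt_trichotomy (t+1) i with h1 | h1 | h1
      · -- all indices ≤ i
        rw [hgdef, spliceIdx_le (by omega : t ≤ i), spliceIdx_le (by omega : t + 1 ≤ i),
          spliceIdx_le (by omega : t + 2 ≤ i)]
        exact htriple t (by omega)
      · -- t + 1 = i : the new triple, use the key lemma
        have hgt : g t = t := spliceIdx_le (by omega)
        have hgt1 : g (t+1) = i := by rw [h1]; exact hgi
        have hgt2 : g (t+2) = j + 1 := by
          rw [hgdef, spliceIdx_gt (by omega)]; omega
        rw [hgt, hgt1, hgt2]
        have hjn : j + 1 < p.length := by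
          have := hgb (t+2) (by omega); rw [hgt2] at this; exact this
        have hk := key_triple G Z f p.length hchain htriple (i := i) (j := j)
          (by omega) hij hjn hfij
        rwa [(by omega : i - 1 = t)] at hk
      · rcases Nat.lt_or_ge i t with h2 | h2
        · -- strictly after the splice point
          have hs1 : g (t+1) = g t + 1 := by rw [hgdef]; exact spliceIdx_succ (by omega)
          have hs2 : g (t+2) = g (t+1) + 1 := by rw [hgdef]; exact spliceIdx_succ (by omega)
          rw [hs2, hs1]
          refine htriple (g t) ?_
          have hb := hgb (t+2) (by omega)
          rw [hs2, hs1] at hb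
          omega
        · -- t = i
          have hti : t = i := by omega
          rw [hti, hgi, hgi1, hgi2, hfij]
          refine htriple j ?_
          have := hgb (i+2) (by omega); rw [hgi2] at this; omega
    have hh : q.head? = p.head? := by
      rw [List.head?_eq_head hqne, List.head?_eq_head hne, List.head_eq_getElem,
        List.head_eq_getElem]
      rw [hq 0 (by omega), hgdef, spliceIdx_le (by omega), hf 0 (by omega)]
    have hl : q.getLast? = p.getLast? := by
      rw [List.getLast?_eq_getLast hqne, List.getLast?_eq_getLast hne,
        List.getLast_eq_getElem, List.getLast_eq_getElem]
      rw [hq (q.length - 1) (by omega)]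
      by_cases hcase : j + 1 = p.length
      · have hgl : g (q.length - 1) = i := by
          rw [hql, hgdef, spliceIdx_le (by omega : m - 1 ≤ i)]; omega
        rw [hgl, hfij, hf j (by omega)]
        exact congrArg some (getElem_idx_congr p (by omega : j = p.length - 1) (by omega))
      · have hgl : g (q.length - 1) = p.length - 1 := by
          rw [hql, hgdef, spliceIdx_gt (by omega : i < m - 1)]; omega
        rw [hgl, hf (p.length - 1) (by omega)]
    obtain ⟨q', hq', h1, h2⟩ := ih m (by omega) q hql hqwalk
    exact ⟨q', hq', h1.trans hh, h2.trans hl⟩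

end ActiveWalkPath

/-- If there is a `Z`-active walk from `X` to `Y` in a mixed graph,
then there is a `Z`-active path from `X` to `Y`. -/
theorem activeWalk_to_activePath {V : Type*} [Fintype V] (G : MixedGraph V)
    (Z : Set V) (x y : V) (p : List V) (hp : G.ActiveWalk Z p)
    (hx : p.head? = some x) (hy : p.getLast? = some y) :
    ∃ q : List V, G.ActivePath Z q ∧ q.head? = some x ∧ q.getLast? = some y := by
  obtain ⟨q, hq, h1, h2⟩ := walk_shorten G Z p.length p rfl hp
  exact ⟨q, hq, h1.trans hx, h2.trans hy⟩
end

section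
/- Let G^C be an admissible cluster-DAG. Then its minimal compatible graph G^m_min is a micro graph compatible with G^C; in particular, G^m_min is acyclic. -/
variable {V : Type*}

section AuxMinGraph

open ClusterDAG

variable {C : Type*} [Fintype C]

/-- If the cluster-DAG is admissible, a directed self-loop forces cluster size ≥ 2. -/
lemma aux_size_two_of_dir_self (GC : ClusterDAG C) (hadm : GC.Admissible) (A : C)
    (h : GC.graph.dir A A) : 2 ≤ GC.size A := by
  obtain ⟨Gm, hGm⟩ := hadm
  obtain ⟨i, j, hij, -⟩ := (hGm.2.2.2.1 A).mp h
  by_contra hlt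
  exact hij (Fin.ext (by omega))

/-- If the cluster-DAG is admissible, a bidirected self-loop forces cluster size ≥ 2. -/
lemma aux_size_two_of_bidir_self (GC : ClusterDAG C) (hadm : GC.Admissible) (A : C)
    (h : GC.graph.bidir A A) : 2 ≤ GC.size A := by
  obtain ⟨Gm, hGm⟩ := hadm
  obtain ⟨i, j, hij, -⟩ := (hGm.2.2.2.2 A).mp h
  by_contra hlt
  exact hij (Fin.ext (by omega))

/-- The minimal compatible graph of an admissible cluster-DAG is acyclic. -/
lemma aux_minGraph_acyclic (GC : ClusterDAG C) (hadm : GC.Admissible) :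
    GC.minGraph.Acyclic := by
  classical
  obtain ⟨Gm, hGm⟩ := hadm
  -- the cluster relation restricted to size-one clusters
  set s₁ : C → C → Prop := fun A B =>
    GC.graph.dir A B ∧ A ≠ B ∧ GC.size A = 1 ∧ GC.size B = 1 with hs₁
  have hmap : ∀ A B, s₁ A B →
      Gm.dir ⟨A, ⟨0, GC.size_pos A⟩⟩ ⟨B, ⟨0, GC.size_pos B⟩⟩ := by
    rintro A B ⟨hd, hne, hA, hB⟩
    obtain ⟨i, j, hij⟩ := (hGm.2.1 A B hne).mp hd
    have hi : i = ⟨0, GC.size_pos A⟩ := Fin.ext (by have := i.isLt; omega)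
    have hj : j = ⟨0, GC.size_pos B⟩ := Fin.ext (by have := j.isLt; omega)
    rwa [hi, hj] at hij
  have hs₁acyc : ∀ A, ¬ Relation.TransGen s₁ A A := by
    intro A h
    exact hGm.1 _ (Relation.TransGen.lift
      (fun X => (⟨X, ⟨0, GC.size_pos X⟩⟩ : GC.MicroV)) hmap _ _ h)
  -- a rank on clusters
  set ρ : C → ℕ := fun A =>
    (Finset.univ.filter (fun X => Relation.TransGen s₁ X A)).card with hρ
  have hρmono : ∀ A B, s₁ A B → ρ A < ρ B := by
    intro A B h
    apply Finset.card_lt_card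
    constructor
    · intro X hX
      rw [Finset.mem_filter] at hX ⊢
      exact ⟨hX.1, hX.2.tail h⟩
    · intro hsub
      have hA : A ∈ Finset.univ.filter (fun X => Relation.TransGen s₁ X B) := by
        rw [Finset.mem_filter]
        exact ⟨Finset.mem_univ A, Relation.TransGen.single h⟩
      have := hsub hA
      rw [Finset.mem_filter] at this
      exact hs₁acyc A this.2
  have hρle : ∀ A, ρ A ≤ Fintype.card C := by
    intro A
    calc ρ A ≤ Finset.univ.card := Finset.card_filter_le _ _
    _ = Fintype.card C := Finset.card_univ
  -- the measure on micro vertices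
  set m : GC.MicroV → ℕ := fun v =>
    if GC.size v.1 = 1 then ρ v.1 + 1
    else if (v.2 : ℕ) = 0 then 0 else Fintype.card C + 1 + (v.2 : ℕ) with hm
  have hstep : ∀ a b, GC.minGraph.dir a b → m a < m b := by
    rintro ⟨A, i⟩ ⟨B, j⟩ (⟨hAB, hd, hij⟩ | ⟨hne, hd, hi0, hj⟩)
    · -- intra-cluster edge
      dsimp only at hAB hd hij ⊢
      subst hAB
      have hjlt := j.isLt
      have hsz : GC.size A ≠ 1 := by omega
      have hj0 : (j : ℕ) ≠ 0 := by omega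
      simp only [hm, hsz, if_false, hj0]
      by_cases hi : (i : ℕ) = 0 <;> simp [hi] <;> omega
    · -- cross-cluster edge
      dsimp only at hne hd hi0 hj ⊢
      have hjlt := j.isLt
      by_cases hA : GC.size A = 1
      · by_cases hB : GC.size B = 1
        · have : ρ A < ρ B := hρmono A B ⟨hd, hne, hA, hB⟩
          simp only [hm, hA, hB, if_true]
          omega
        · have hj0 : (j : ℕ) ≠ 0 := by omega
          have := hρle A
          simp only [hm, hA, hB, if_true, if_false, hj0]
          omega
      · simp only [hm, hA, if_false, hi0, if_true]
        by_cases hB : GC.size B = 1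
        · simp [hB]
        · have hj0 : (j : ℕ) ≠ 0 := by omega
          simp only [hB, if_false, hj0]
          omega
  intro v hv
  have h1 : Relation.TransGen (fun x y : ℕ => x < y) (m v) (m v) :=
    Relation.TransGen.lift m hstep _ _ hv
  rw [Relation.transGen_eq_self (r := fun x y : ℕ => x < y)] at h1
  exact lt_irrefl _ h1

end AuxMinGraph

/-- The minimal compatible graph of an admissible cluster-DAG is a
compatible micro graph; in particular it is acyclic. -/
theorem minGraph_compatible {C : Type*} [Fintype C] (GC : ClusterDAG C)
    (hadm : GC.Admissible) :
    GC.Compatible GC.minGraph ∧ GC.minGraph.Acyclic := by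
  have hacyc := aux_minGraph_acyclic GC hadm
  refine ⟨⟨hacyc, ?_, ?_, ?_, ?_⟩, hacyc⟩
  · -- cross directed edges
    intro A B hne
    constructor
    · intro hd
      refine ⟨⟨0, GC.size_pos A⟩, ⟨GC.size B - 1, by have := GC.size_pos B; omega⟩,
        Or.inr ⟨hne, hd, rfl, rfl⟩⟩
    · rintro ⟨i, j, (⟨-, hd, -⟩ | ⟨-, hd, -⟩)⟩ <;> exact hd
  · -- cross bidirected edges
    intro A B hne
    constructor
    · intro hb
      exact ⟨⟨0, GC.size_pos A⟩, ⟨0, GC.size_pos B⟩, hb,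
        fun h => hne (congrArg Sigma.fst h)⟩
    · rintro ⟨i, j, hb, -⟩
      exact hb
  · -- directed self-loops
    intro A
    constructor
    · intro hd
      have hsz := aux_size_two_of_dir_self GC hadm A hd
      refine ⟨⟨0, by omega⟩, ⟨1, by omega⟩, ?_, Or.inl ⟨rfl, hd, by simp⟩⟩
      intro h
      simpa using congrArg Fin.val h
    · rintro ⟨i, j, hij, (⟨-, hd, -⟩ | ⟨hne, -, -⟩)⟩
      · exact hd
      · exact absurd rfl hne
  · -- bidirected self-loops
    intro A
    constructor
    · intro hb
      have hsz := aux_size_two_of_bidir_self GC hadm A hb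
      refine ⟨⟨0, by omega⟩, ⟨1, by omega⟩, ?_, hb, ?_⟩
      · intro h
        simpa using congrArg Fin.val h
      · intro h
        have := congrArg (fun v : GC.MicroV => (v.2 : ℕ)) h
        simpa using this
    · rintro ⟨i, j, hij, hb, -⟩
      exact hb
end
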